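/- Assume h ∘ h = 0 and h(Y) = 0. Then for every z ∈ V one has g₀(h(X₀), X₀) · h(z) = g₀(h(X₀), z) · h(X₀); in other words, g₀(ᵉh(X₀), X₀) · ᵉh equals the rank-one operator ᵉh(X₀) ⊗ (ᵉh(X₀))♭. -/
import Mathlib


/-- For a nilpotent-of-index-2 deformation `h` with `h Y = 0`:
`g₀(h X₀, X₀) • h z = g₀(h X₀, z) • h X₀` for every `z`. -/
theorem stmt2 {V : Type*} [AddCommGroup V] [Module ℝ V] [FiniteDimensional ℝ V]
    (g₀ : V →ₗ[ℝ] V →ₗ[ℝ] ℝ) (hg₀symm : ∀ u v : V, g₀ u v = g₀ v u)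
    (h : V →ₗ[ℝ] V) (hsymm : ∀ u v : V, g₀ (h u) v = g₀ u (h v))
    (Y X₀ : V) (hYY : g₀ Y Y = -1) (hXX : g₀ X₀ X₀ = -1) (hYX : g₀ Y X₀ = 0)
    (hpos : ∀ w : V, w ≠ 0 → g₀ w Y = 0 → g₀ w X₀ = 0 → 0 < g₀ w w)
    (hnil : h ∘ₗ h = 0) (hY0 : h Y = 0) :
    ∀ z : V, g₀ (h X₀) X₀ • h z = g₀ (h X₀) z • h X₀ := by
  have hhu : ∀ u : V, h (h u) = 0 := by
    intro u
    have := LinearMap.ext_iff.mp hnil u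
    simpa using this
  have hnull : ∀ u v : V, g₀ (h u) (h v) = 0 := by
    intro u v
    rw [← hsymm, hhu]
    simp
  have hYo : ∀ u : V, g₀ (h u) Y = 0 := by
    intro u
    rw [hg₀symm, ← hsymm, hY0]
    simp
  intro z
  set a := g₀ (h X₀) X₀ with ha
  set b := g₀ (h X₀) z with hb
  set w := a • h z - b • h X₀ with hw
  have hwY : g₀ w Y = 0 := by
    simp [hw, hYo]
  have hwX : g₀ w X₀ = 0 := by
    have h1 : g₀ (h z) X₀ = b := by rw [hb, hg₀symm, ← hsymm]
    simp [hw, h1]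
    ring
  have hww : g₀ w w = 0 := by
    simp [hw, hnull]
  have hw0 : w = 0 := by
    by_contra hne
    have := hpos w hne hwY hwX
    rw [hww] at this
    exact lt_irrefl 0 this
  have := sub_eq_zero.mp (hw ▸ hw0)
  simpa using this
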